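/- Let q ≥ 1, let a_1,…,a_q ∈ ℂ be pairwise distinct, let w ∈ ℂ with w ≠ a_m for every m, and let g ∈ ℂ∖{0}. Set l = min_{1 ≤ i < j ≤ q} |a_i − a_j| (with l = +∞ and log⁺(2/l) = 0 when q = 1). Then (q−1)·log⁺|w| + log|g| ≤ Σ_{m=1}^q log|w − a_m| + log( Σ_{m=1}^q |g|/|w − a_m| ) + Σ_{m=1}^q log⁺|a_m| + (q−1)·log⁺(2/l) + (q−1)·log 2. -/

import Mathlib

open MeasureTheory Filter Complex Asymptotics

noncomputable section
open scoped Classical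

/-- The order of vanishing of `f` at `z` (negative at a pole), as an element of
`ℤ ∪ {∞}` (`⊤` if `f` vanishes identically near `z`); junk value `0` if `f` is not
meromorphic at `z`. -/
def mord (f : ℂ → ℂ) (z : ℂ) : WithTop ℤ :=
  if h : MeromorphicAt f z then meromorphicOrderAt f z else 0

/-- The pole multiplicity of `f` at `z`. -/
def poleMult (f : ℂ → ℂ) (z : ℂ) : ℕ := (-(WithTop.untopD 0 (mord f z))).toNat

/-- The zero multiplicity of `f` at `z`. -/
def zeroMult (f : ℂ → ℂ) (z : ℂ) : ℕ := (WithTop.untopD 0 (mord f z)).toNat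

/-- `n(t, f)`: the number of poles of `f` in the closed disc of radius `t`,
counted with multiplicity. -/
def cntPole (f : ℂ → ℂ) (t : ℝ) : ℝ :=
  ∑ᶠ z ∈ Metric.closedBall (0 : ℂ) t, (poleMult f z : ℝ)

/-- `n(t, 1/f)`: the number of zeros of `f` in the closed disc of radius `t`,
counted with multiplicity. -/
def cntZero (f : ℂ → ℂ) (t : ℝ) : ℝ :=
  ∑ᶠ z ∈ Metric.closedBall (0 : ℂ) t, (zeroMult f z : ℝ)

/-- `N(r, f)`: the integrated counting function of the poles of `f`. -/
def NevN (f : ℂ → ℂ) (r : ℝ) : ℝ :=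
  (∫ t in (0:ℝ)..r, (cntPole f t - cntPole f 0) / t) + cntPole f 0 * Real.log r

/-- `N(r, 1/f)`: the integrated counting function of the zeros of `f`. -/
def NevN0 (f : ℂ → ℂ) (r : ℝ) : ℝ :=
  (∫ t in (0:ℝ)..r, (cntZero f t - cntZero f 0) / t) + cntZero f 0 * Real.log r

/-- `log⁺ x = max (log x) 0`. -/
def posLog (x : ℝ) : ℝ := max (Real.log x) 0

/-- The point `r·e^{iθ}`. -/
def circ (r θ : ℝ) : ℂ := (r : ℂ) * Complex.exp (θ * Complex.I)

/-- `m(r, f)`: the Nevanlinna proximity function. -/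
def Nevm (f : ℂ → ℂ) (r : ℝ) : ℝ :=
  (2 * Real.pi)⁻¹ * ∫ θ in (0:ℝ)..(2 * Real.pi), posLog (‖f (circ r θ)‖)

/-- `T(r, f)`: the Nevanlinna characteristic. -/
def NevT (f : ℂ → ℂ) (r : ℝ) : ℝ := Nevm f r + NevN f r

/-- `n̄(t, f)`: the number of poles of `f` in the closed disc of radius `t`,
each counted once, ignoring multiplicity. -/
def cntPoleRed (f : ℂ → ℂ) (t : ℝ) : ℝ :=
  ∑ᶠ z ∈ Metric.closedBall (0 : ℂ) t, (if mord f z < 0 then (1:ℝ) else 0)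

/-- `N̄(r, f)`: the integrated counting function of poles, ignoring multiplicity. -/
def NevNbar (f : ℂ → ℂ) (r : ℝ) : ℝ :=
  (∫ t in (0:ℝ)..r, (cntPoleRed f t - cntPoleRed f 0) / t) + cntPoleRed f 0 * Real.log r

/-- `h ∈ S(f)`: `h` is meromorphic in `ℂ` and `T(r,h) = o(T(r,f))` as `r → ∞`
outside a set `E` of finite linear measure. -/
def SmallFn (f h : ℂ → ℂ) : Prop :=
  MeromorphicOn h Set.univ ∧ ∃ E : Set ℝ, volume E < ⊤ ∧
    NevT h =o[atTop ⊓ Filter.principal Eᶜ] NevT f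

/-- The linear differential operator `L(h) = h⁽ⁿ⁾ + α_{n-1}·h⁽ⁿ⁻¹⁾ + ⋯ + α_0·h`. -/
def Lop (n : ℕ) (α : ℕ → ℂ → ℂ) (h : ℂ → ℂ) : ℂ → ℂ :=
  fun z => iteratedDeriv n h z + ∑ j ∈ Finset.range n, α j z * iteratedDeriv j h z

/-- `a` is `(L,f)`-exceptional, where `g = L(f)`: at every point where `f - a` has a
zero of some order, `g` has a zero of at least that order (so the preimage multiset
of `a` under `f` is contained in the zero multiset of `L(f)`). -/
def Exceptional (g f a : ℂ → ℂ) : Prop :=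
  ∀ z : ℂ, 0 < mord (fun w => f w - a w) z → mord (fun w => f w - a w) z ≤ mord g z

/-- Counting function of the zeros of `g` situated at points satisfying `P`,
counted according to their multiplicity as zeros of `g`. -/
def cntZeroOn (g : ℂ → ℂ) (P : ℂ → Prop) (t : ℝ) : ℝ :=
  ∑ᶠ z ∈ Metric.closedBall (0 : ℂ) t, (if P z then (zeroMult g z : ℝ) else 0)

/-- `N|_P(r, 1/g)`: integrated counting function of the zeros of `g` at points
satisfying `P`, counted according to their multiplicity as zeros of `g`. -/
def NevNZeroOn (g : ℂ → ℂ) (P : ℂ → Prop) (r : ℝ) : ℝ :=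
  (∫ t in (0:ℝ)..r, (cntZeroOn g P t - cntZeroOn g P 0) / t) +
    cntZeroOn g P 0 * Real.log r

/-- `θ_{L,f}(a)`, where `g = L(f)`: the index of multiplicity with respect to `L(f)`. -/
def thetaOp (g f a : ℂ → ℂ) : ℝ :=
  Filter.liminf
    (fun r => NevNZeroOn g (fun z => 0 < mord (fun w => f w - a w) z) r / NevT f r) atTop

/-- `θ_{L,f}(∞)`, where `g = L(f)`. -/
def thetaOpInf (g f : ℂ → ℂ) : ℝ :=
  Filter.liminf (fun r => (2 * NevN f r - NevN g r) / NevT f r) atTop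

/-- The Nevanlinna deficiency `δ(a,f)` of the target function `a`. -/
def Nevdelta (f a : ℂ → ℂ) : ℝ :=
  Filter.liminf (fun r => Nevm (fun z => (f z - a z)⁻¹) r / NevT f r) atTop

/-- `δ(∞,f)`. -/
def NevdeltaInf (f : ℂ → ℂ) : ℝ :=
  Filter.liminf (fun r => Nevm f r / NevT f r) atTop

/-- The Valiron deficiency `Δ(a,f)`. -/
def valironDelta (f : ℂ → ℂ) (a : ℂ) : ℝ :=
  1 - Filter.liminf (fun r => NevN0 (fun z => f z - a) r / NevT f r) atTop

/-- The hyper-order `ς(f) = limsup_{r→∞} log log T(r,f) / log r`. -/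
def hyperOrder (f : ℂ → ℂ) : EReal :=
  Filter.limsup (fun r => ((Real.log (Real.log (NevT f r)) / Real.log r : ℝ) : EReal)) atTop

/-- The order of growth `ρ(f) = limsup_{r→∞} log T(r,f) / log r`. -/
def growthOrder (f : ℂ → ℂ) : EReal :=
  Filter.limsup (fun r => ((Real.log (NevT f r) / Real.log r : ℝ) : EReal)) atTop

/-- A subset of `(1,∞)` of finite logarithmic measure. -/
def FiniteLogMeasure (F : Set ℝ) : Prop :=
  F ⊆ Set.Ioi 1 ∧ (∫⁻ t in F, ENNReal.ofReal t⁻¹) < ⊤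

/-- The initial Laurent coefficient `ilc(h, 0)` of `h` at the origin. -/
def ilc (h : ℂ → ℂ) : ℂ :=
  limUnder (nhdsWithin (0 : ℂ) {(0 : ℂ)}ᶜ)
    (fun z => z ^ (-(WithTop.untopD 0 (mord h 0))) * h z)

end

/-! Choose `s` with `‖w - a s‖` minimal. For `m ≠ s` the triangle inequality gives
`l ≤ ‖a m - a s‖ ≤ 2 ‖w - a m‖`, so
`log⁺ ‖w‖ ≤ log 2 + log⁺ ‖w - a m‖ + log⁺ ‖a m‖` with
`log⁺ ‖w - a m‖ = log ‖w - a m‖ + log⁺ ‖w - a m‖⁻¹`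
`≤ log ‖w - a m‖ + log⁺ (2 / l)`.
Summing over `m ≠ s` leaves `log ‖g‖ - log ‖w - a s‖`, which is at most the logarithm of
the full sum `∑ m, ‖g‖ / ‖w - a m‖`. -/

open scoped Real

lemma posLog_eq_real_posLog (x : ℝ) : posLog x = log⁺ x := max_comm _ _

section PairwiseDistance

variable {ι E : Type*} [Finite ι]

lemma finite_setOf_norm_sub [SeminormedAddCommGroup E] (a : ι → E) :
    {d : ℝ | ∃ i j : ι, i ≠ j ∧ d = ‖a i - a j‖}.Finite :=
  (Set.finite_range fun p : ι × ι => ‖a p.1 - a p.2‖).subset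
    fun _ ⟨i, j, _, hd⟩ => ⟨(i, j), hd.symm⟩

lemma sInf_setOf_norm_sub_le [SeminormedAddCommGroup E] (a : ι → E) {i j : ι} (hij : i ≠ j) :
    sInf {d : ℝ | ∃ i j : ι, i ≠ j ∧ d = ‖a i - a j‖} ≤ ‖a i - a j‖ :=
  csInf_le (finite_setOf_norm_sub a).bddBelow ⟨i, j, hij, rfl⟩

lemma sInf_setOf_norm_sub_pos [NormedAddCommGroup E] {a : ι → E} (ha : Function.Injective a)
    {i j : ι} (hij : i ≠ j) :
    0 < sInf {d : ℝ | ∃ i j : ι, i ≠ j ∧ d = ‖a i - a j‖} := by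
  rw [(finite_setOf_norm_sub a).lt_csInf_iff ⟨_, i, j, hij, rfl⟩]
  rintro _ ⟨i', j', hij', rfl⟩
  exact norm_pos_iff.mpr (sub_ne_zero.mpr (ha.ne hij'))

end PairwiseDistance

lemma posLog_norm_le_of_norm_sub_le {E : Type*} [SeminormedAddCommGroup E] {w b c : E} {l : ℝ}
    (hl : 0 < l) (hlbc : l ≤ ‖b - c‖) (hc : ‖w - c‖ ≤ ‖w - b‖) :
    log⁺ ‖w‖ ≤ Real.log ‖w - b‖ + log⁺ ‖b‖ + log⁺ (2 / l) + Real.log 2 := by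
  have hbc : ‖b - c‖ ≤ 2 * ‖w - b‖ := by
    have := norm_sub_le_norm_sub_add_norm_sub b w c
    rw [norm_sub_rev b w] at this
    linarith
  have hwb : 0 < ‖w - b‖ := by linarith
  have hinv : log⁺ ‖w - b‖⁻¹ ≤ log⁺ (2 / l) := by
    refine Real.posLog_le_posLog (by positivity) ?_
    rw [inv_le_iff_one_le_mul₀ hwb, div_mul_eq_mul_div, le_div_iff₀ hl]
    linarith
  have hsplit := Real.posLog_sub_posLog_inv (x := ‖w - b‖)
  calc log⁺ ‖w‖ = log⁺ ‖(w - b) + b‖ := by rw [sub_add_cancel]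
    _ ≤ log⁺ ‖w - b‖ + log⁺ ‖b‖ + Real.log 2 := Real.posLog_norm_add_le _ _
    _ ≤ Real.log ‖w - b‖ + log⁺ ‖b‖ + log⁺ (2 / l) + Real.log 2 := by linarith

/-- The elementary pointwise inequality underlying the second main
theorem with general ramification-type term. -/
theorem pointwise_smt_inequality
    (q : ℕ) (hq : 1 ≤ q) (a : Fin q → ℂ) (ha : Function.Injective a)
    (w : ℂ) (hw : ∀ m : Fin q, w ≠ a m) (g : ℂ) (hg : g ≠ 0)
    (l : ℝ) (hl : l = sInf {d : ℝ | ∃ i j : Fin q, i ≠ j ∧ d = ‖a i - a j‖}) :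
    ((q : ℝ) - 1) * posLog (‖w‖) + Real.log (‖g‖) ≤
      (∑ m : Fin q, Real.log (‖w - a m‖)) +
      Real.log (∑ m : Fin q, ‖g‖ / ‖w - a m‖) +
      (∑ m : Fin q, posLog (‖a m‖)) +
      ((q : ℝ) - 1) * posLog (2 / l) + ((q : ℝ) - 1) * Real.log 2 := by
  simp only [posLog_eq_real_posLog]
  obtain ⟨s, -, hs⟩ :=
    Finset.univ.exists_min_image (fun m => ‖w - a m‖) ⟨⟨0, hq⟩, Finset.mem_univ _⟩
  have hfar : ∀ m ∈ Finset.univ.erase s,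
      log⁺ ‖w‖ ≤ Real.log ‖w - a m‖ + log⁺ ‖a m‖ + log⁺ (2 / l) + Real.log 2 := by
    intro m hm
    have hms := Finset.ne_of_mem_erase hm
    exact posLog_norm_le_of_norm_sub_le (hl ▸ sInf_setOf_norm_sub_pos ha hms)
      (hl ▸ sInf_setOf_norm_sub_le a hms) (hs m (Finset.mem_univ m))
  have hcard : ((Finset.univ.erase s).card : ℝ) = q - 1 := by
    rw [Finset.card_erase_of_mem (Finset.mem_univ s), Finset.card_univ, Fintype.card_fin,
      Nat.cast_sub hq, Nat.cast_one]
  have hsum := Finset.sum_le_sum hfar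
  simp only [Finset.sum_add_distrib, Finset.sum_const, nsmul_eq_mul, hcard] at hsum
  have hws : 0 < ‖w - a s‖ := norm_pos_iff.mpr (sub_ne_zero.mpr (hw s))
  have hnear : Real.log (‖g‖ / ‖w - a s‖) ≤ Real.log (∑ m, ‖g‖ / ‖w - a m‖) :=
    Real.log_le_log (div_pos (norm_pos_iff.mpr hg) hws) <|
      Finset.single_le_sum (f := fun m => ‖g‖ / ‖w - a m‖) (fun _ _ => by positivity)
        (Finset.mem_univ s)
  rw [Real.log_div (norm_ne_zero_iff.mpr hg) hws.ne'] at hnear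
  have hposLog : ∑ m ∈ Finset.univ.erase s, log⁺ ‖a m‖ ≤ ∑ m, log⁺ ‖a m‖ :=
    Finset.sum_le_sum_of_subset_of_nonneg (Finset.subset_univ _) fun _ _ _ => Real.posLog_nonneg
  rw [← Finset.sum_erase_add _ _ (Finset.mem_univ s)]
  linarith
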